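/- Continuation substitution principle for handlers: if Δ, x : A₁, y : A₂; Γ ⊢ c′ ÷ A₃ and Δ; Γ, k ∼: A₁ @ A₂ ⇒ A₃ ⊢ h ÷ C[Ψ] ⇒@S C′, then Δ; Γ ⊢ ⟨⟨(x, y). c′ / k⟩⟩ h ÷ C[Ψ] ⇒@S C′. -/
import Mathlib


/-!
ECMTT (Effectful Contextual Modal Type Theory), Zyuzin & Nanevski.

De Bruijn representation with two separate variable namespaces:
* Δ-indices for value variables `x : A` and modal variables `u :: A[Ψ]`
  (both live in the modal context Δ; index 0 is the most recently bound).
* Γ-indices for operations `op ÷ A ⇒ B` and continuations `k ∼: A @ S ⇒ B`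
  (both live in the effect context Γ; index 0 is the most recently bound).
An algebraic theory Ψ is a list of operation signatures (input, output).
-/

inductive Ty : Type where
  | base : ℕ → Ty
  | unit : Ty
  | arrow : Ty → Ty → Ty
  | box : List (Ty × Ty) → Ty → Ty

/-- Algebraic theory: list of operation signatures `A ⇒ B`. -/
abbrev Theory := List (Ty × Ty)

/-- Modal-context hypotheses: value variables and modal variables. -/
inductive DHyp : Type where
  | val : Ty → DHyp
  | modal : Ty → Theory → DHyp

/-- Effect-context hypotheses: operations and continuations. -/
inductive GHyp : Type where
  | op : Ty → Ty → GHyp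
  | cont : Ty → Ty → Ty → GHyp   -- `k ∼: A @ S ⇒ B`

abbrev DCtx := List DHyp
abbrev GCtx := List GHyp

/-- An algebraic theory viewed as an effect context (operations only). -/
def thCtx (Ψ : Theory) : GCtx := Ψ.map fun p => GHyp.op p.1 p.2

mutual
  /-- Expressions. -/
  inductive Expr : Type where
    | var : ℕ → Expr                      -- value variable (Δ-index)
    | unit : Expr                         -- the value () of the unit type
    | lam : Ty → Expr → Expr              -- λx:A. e  (binds a Δ value var)
    | app : Expr → Expr → Expr
    | box : Theory → Comp → Expr          -- box Ψ. c (resets Γ to Ψ)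
    | letbox : Expr → Expr → Expr         -- let box u = e₁ in e₂ (binds a Δ modal var)
  /-- Computations. -/
  inductive Comp : Type where
    | ret : Expr → Comp
    | bind : Stmt → Comp → Comp           -- x ← s; c (binds a Δ value var)
    | letbox : Expr → Comp → Comp         -- let box u = e in c (binds a Δ modal var)
  /-- Statements. -/
  inductive Stmt : Type where
    | op : ℕ → Expr → Stmt                -- op e (Γ-index)
    | cont : ℕ → Expr → Expr → Stmt       -- k(e₁, e₂) (Γ-index)
    | handle : ℕ → HSeq → Handler → Expr → Stmt  -- u with [Θ] h @ e (Δ-index for u)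
  /-- Handlers. -/
  inductive Handler : Type where
    | retc : Comp → Handler               -- (return x @ z ↦ c): c binds x (idx1), z (idx0)
    | opc : Handler → Comp → Handler      -- h, (op(x,k) @ z ↦ c): c binds x(Δ1), z(Δ0), k(Γ0)
  /-- Handling sequences. -/
  inductive HSeq : Type where
    | nil : HSeq
    | cons : HSeq → Handler → Expr → Comp → HSeq  -- Θ, (h @ e to x. c): c binds x (Δ0)
end

/-- Lift a renaming under one binder. -/
def liftR (ρ : ℕ → ℕ) : ℕ → ℕ
  | 0 => 0
  | n + 1 => ρ n + 1

mutual
  /-- Renaming of Δ-indices. -/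
  def renDE (ρ : ℕ → ℕ) : Expr → Expr
    | .var n => .var (ρ n)
    | .unit => .unit
    | .lam A e => .lam A (renDE (liftR ρ) e)
    | .app e1 e2 => .app (renDE ρ e1) (renDE ρ e2)
    | .box Ψ c => .box Ψ (renDC ρ c)
    | .letbox e1 e2 => .letbox (renDE ρ e1) (renDE (liftR ρ) e2)
  def renDC (ρ : ℕ → ℕ) : Comp → Comp
    | .ret e => .ret (renDE ρ e)
    | .bind s c => .bind (renDS ρ s) (renDC (liftR ρ) c)
    | .letbox e c => .letbox (renDE ρ e) (renDC (liftR ρ) c)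
  def renDS (ρ : ℕ → ℕ) : Stmt → Stmt
    | .op i e => .op i (renDE ρ e)
    | .cont k e1 e2 => .cont k (renDE ρ e1) (renDE ρ e2)
    | .handle u Θ h e => .handle (ρ u) (renDT ρ Θ) (renDH ρ h) (renDE ρ e)
  def renDH (ρ : ℕ → ℕ) : Handler → Handler
    | .retc c => .retc (renDC (liftR (liftR ρ)) c)
    | .opc h c => .opc (renDH ρ h) (renDC (liftR (liftR ρ)) c)
  def renDT (ρ : ℕ → ℕ) : HSeq → HSeq
    | .nil => .nil
    | .cons Θ h e c => .cons (renDT ρ Θ) (renDH ρ h) (renDE ρ e) (renDC (liftR ρ) c)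
end

mutual
  /-- Renaming of Γ-indices (expressions contain no free Γ-variables). -/
  def renGC (ρ : ℕ → ℕ) : Comp → Comp
    | .ret e => .ret e
    | .bind s c => .bind (renGS ρ s) (renGC ρ c)
    | .letbox e c => .letbox e (renGC ρ c)
  def renGS (ρ : ℕ → ℕ) : Stmt → Stmt
    | .op i e => .op (ρ i) e
    | .cont k e1 e2 => .cont (ρ k) e1 e2
    | .handle u Θ h e => .handle u Θ (renGH ρ h) e
  def renGH (ρ : ℕ → ℕ) : Handler → Handler
    | .retc c => .retc (renGC ρ c)
    | .opc h c => .opc (renGH ρ h) (renGC (liftR ρ) c)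
end

/-- Index adjustment for removing the Δ-variable at depth `d`. -/
def sIdx (d m : ℕ) : ℕ := if m < d then m else m - 1

/-- Variable case of expression substitution at depth `d`. -/
def sVar (e : Expr) (d m : ℕ) : Expr :=
  if m < d then .var m else if m = d then renDE (· + d) e else .var (m - 1)

mutual
  /-- Expression substitution `[e/x]·`: substitute `e` for the Δ value variable at depth `d`. -/
  def esbE (e : Expr) : ℕ → Expr → Expr
    | d, .var m => sVar e d m
    | _, .unit => .unit
    | d, .lam A e' => .lam A (esbE e (d+1) e')
    | d, .app e1 e2 => .app (esbE e d e1) (esbE e d e2)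
    | d, .box Ψ c => .box Ψ (esbC e d c)
    | d, .letbox e1 e2 => .letbox (esbE e d e1) (esbE e (d+1) e2)
  def esbC (e : Expr) : ℕ → Comp → Comp
    | d, .ret e' => .ret (esbE e d e')
    | d, .bind s c => .bind (esbS e d s) (esbC e (d+1) c)
    | d, .letbox e' c => .letbox (esbE e d e') (esbC e (d+1) c)
  def esbS (e : Expr) : ℕ → Stmt → Stmt
    | d, .op i e' => .op i (esbE e d e')
    | d, .cont k e1 e2 => .cont k (esbE e d e1) (esbE e d e2)
    | d, .handle u Θ h e' => .handle (sIdx d u) (esbT e d Θ) (esbH e d h) (esbE e d e')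
  def esbH (e : Expr) : ℕ → Handler → Handler
    | d, .retc c => .retc (esbC e (d+2) c)
    | d, .opc h c => .opc (esbH e d h) (esbC e (d+2) c)
  def esbT (e : Expr) : ℕ → HSeq → HSeq
    | _, .nil => .nil
    | d, .cons Θ h e' c => .cons (esbT e d Θ) (esbH e d h) (esbE e d e') (esbC e (d+1) c)
end

/-- Monadic substitution `⟨c/x⟩c′` (Figure 5a): sequentially compose `c` before `c′` via `x`. -/
def monSub : Comp → Comp → Comp
  | .ret e, c' => esbC e 0 c'
  | .bind s c, c' => .bind s (monSub c (renDC (liftR Nat.succ) c'))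
  | .letbox e c, c' => .letbox e (monSub c (renDC (liftR Nat.succ) c'))

/-- Index adjustment for removing the Γ-variable at position `g`. -/
def adjG (g m : ℕ) : ℕ := if m < g then m else m - 1

mutual
  /-- Continuation substitution `⟨⟨(x,y). body / k⟩⟩ ·` (Figure 5b).
  `body` is typed in `Δ, x, y; Γ` (so `y` is Δ-index 0 and `x` is Δ-index 1);
  `g` is the current Γ-index of `k`; `dsh`/`gsh` record the crossed Δ and Γ binders. -/
  def ksubC (body : Comp) : ℕ → ℕ → ℕ → Comp → Comp
    | _, _, _, .ret e => .ret e
    | g, dsh, gsh, .bind (.cont k e1 e2) c' =>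
        if k = g then
          monSub
            (esbC e2 0 (esbC e1 1
              (renDC (liftR (liftR (· + dsh))) (renGC (· + gsh) body))))
            (ksubC body g (dsh+1) gsh c')
        else
          .bind (.cont (adjG g k) e1 e2) (ksubC body g (dsh+1) gsh c')
    | g, dsh, gsh, .bind (.op i e) c' =>
        .bind (.op (adjG g i) e) (ksubC body g (dsh+1) gsh c')
    | g, dsh, gsh, .bind (.handle u Θ h e) c' =>
        .bind (.handle u Θ (ksubH body g dsh gsh h) e) (ksubC body g (dsh+1) gsh c')
    | g, dsh, gsh, .letbox e c' => .letbox e (ksubC body g (dsh+1) gsh c')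
  def ksubH (body : Comp) : ℕ → ℕ → ℕ → Handler → Handler
    | g, dsh, gsh, .retc c => .retc (ksubC body g (dsh+2) gsh c)
    | g, dsh, gsh, .opc h c =>
        .opc (ksubH body g dsh gsh h) (ksubC body (g+1) (dsh+2) (gsh+1) c)
end

/-- The return clause of a handler. -/
def hret : Handler → Comp
  | .retc c => c
  | .opc h _ => hret h

/-- The clause of a handler for the operation with Γ-index `i` (0 = last-added operation). -/
def hop : Handler → ℕ → Comp
  | .retc c, _ => c
  | .opc _ c, 0 => c
  | .opc h _, i + 1 => hop h i

/-- Handling `⦃·⦄ h @ e` (Figure 5c), carrying a pending Δ-renaming `ρ` of the handled term. -/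
def hndl : Comp → (ℕ → ℕ) → Handler → Expr → Comp
  | .ret e', ρ, h, _e =>
      -- [ρ e′ / x] [e / z] (return clause)
      esbC (renDE ρ e') 0 (esbC _e 0 (hret h))
  | .bind (.op i e') c', ρ, h, e =>
      -- ⟨⟨(y, z′). ⦃c′⦄ h @ z′ / k⟩⟩ ([ρ e′ / x′] [e / z] c_op)
      ksubC (hndl c' (fun n => liftR ρ n + 1) (renDH (· + 2) h) (.var 0)) 0 0 0
        (esbC (renDE ρ e') 0 (esbC e 0 (hop h i)))
  | .bind (.cont k e1 e2) c', ρ, h, e =>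
      -- unreachable on well-typed input (the handled term lives in a theory, no continuations)
      .bind (renDS ρ (.cont k e1 e2)) (hndl c' (liftR ρ) (renDH (· + 1) h) (renDE (· + 1) e))
  | .bind (.handle u Θ h' e') c', ρ, h, e =>
      .bind (.handle (ρ u)
          (.cons (renDT ρ Θ) (renDH ρ h') (renDE ρ e') (renDC (liftR ρ) c')) h e)
        (.ret (.var 0))
  | .letbox e' c', ρ, h, e =>
      .letbox (renDE ρ e') (hndl c' (liftR ρ) (renDH (· + 1) h) (renDE (· + 1) e))

/-- Handling sequencing `⦃·⦄ Θ` (Figure 5d). -/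
def hndlSeq : Comp → HSeq → Comp
  | c, .nil => c
  | c, .cons Θ h e c' => monSub (hndl (hndlSeq c Θ) id h e) c'

mutual
  /-- Modal substitution `[[Ψ. c / u]] ·` for the modal variable at Δ-depth `d` (Appendix A). -/
  def msubE (c : Comp) : ℕ → Expr → Expr
    | d, .var m => .var (sIdx d m)
    | _, .unit => .unit
    | d, .lam A e => .lam A (msubE c (d+1) e)
    | d, .app e1 e2 => .app (msubE c d e1) (msubE c d e2)
    | d, .box Ψ c' => .box Ψ (msubC c d c')
    | d, .letbox e1 e2 => .letbox (msubE c d e1) (msubE c (d+1) e2)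
  def msubC (c : Comp) : ℕ → Comp → Comp
    | d, .ret e => .ret (msubE c d e)
    | d, .bind (.handle u Θ h e) c' =>
        if u = d then
          -- guarded occurrence of u: ⟨ ⦃⦃c⦄Θ'⦄ h' @ e' / x′ ⟩ c″
          monSub
            (hndl (hndlSeq (renDC (· + d) c) (msubT c d Θ)) id (msubH c d h) (msubE c d e))
            (msubC c (d+1) c')
        else
          .bind (.handle (sIdx d u) (msubT c d Θ) (msubH c d h) (msubE c d e))
            (msubC c (d+1) c')
    | d, .bind (.op i e) c' => .bind (.op i (msubE c d e)) (msubC c (d+1) c')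
    | d, .bind (.cont k e1 e2) c' =>
        .bind (.cont k (msubE c d e1) (msubE c d e2)) (msubC c (d+1) c')
    | d, .letbox e c' => .letbox (msubE c d e) (msubC c (d+1) c')
  def msubS (c : Comp) : ℕ → Stmt → Stmt
    | d, .op i e => .op i (msubE c d e)
    | d, .cont k e1 e2 => .cont k (msubE c d e1) (msubE c d e2)
    | d, .handle u Θ h e => .handle (sIdx d u) (msubT c d Θ) (msubH c d h) (msubE c d e)
  def msubH (c : Comp) : ℕ → Handler → Handler
    | d, .retc c' => .retc (msubC c (d+2) c')
    | d, .opc h c' => .opc (msubH c d h) (msubC c (d+2) c')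
  def msubT (c : Comp) : ℕ → HSeq → HSeq
    | _, .nil => .nil
    | d, .cons Θ h e c' => .cons (msubT c d Θ) (msubH c d h) (msubE c d e) (msubC c (d+1) c')
end

/-- Clause of the identity handler for the operation with Γ-index `n` (relative to the full
theory): `opₙ(x, k) @ z ↦ y ← opₙ x; k(y, z)`. Inside the clause body the effect context is
extended by `k`, so the operation index becomes `n + 1`. -/
def idClause (n : ℕ) : Comp :=
  .bind (.op (n+1) (.var 1)) (.bind (.cont 0 (.var 0) (.var 1)) (.ret (.var 0)))

def idHandlerAux : ℕ → Theory → Handler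
  | _, [] => .retc (.ret (.var 1))     -- return x @ z ↦ ret x
  | n, _ :: Ψ => .opc (idHandlerAux (n+1) Ψ) (idClause n)

/-- The identity handler `id_Ψ` for a theory `Ψ`. -/
def idHandler (Ψ : Theory) : Handler := idHandlerAux 0 Ψ

mutual
  /-- Expression typing `Δ ⊢ e : A`. -/
  inductive ETy : DCtx → Expr → Ty → Prop where
    | var : Δ[x]? = some (.val A) → ETy Δ (.var x) A
    | unit : ETy Δ .unit .unit
    | lam : ETy (.val A :: Δ) e B → ETy Δ (.lam A e) (.arrow A B)
    | app : ETy Δ e1 (.arrow A B) → ETy Δ e2 A → ETy Δ (.app e1 e2) B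
    | box : CTy Δ (thCtx Ψ) c A → ETy Δ (.box Ψ c) (.box Ψ A)
    | letbox : ETy Δ e1 (.box Ψ A) → ETy (.modal A Ψ :: Δ) e2 B →
        ETy Δ (.letbox e1 e2) B
  /-- Computation typing `Δ; Γ ⊢ c ÷ A`. -/
  inductive CTy : DCtx → GCtx → Comp → Ty → Prop where
    | ret : ETy Δ e A → CTy Δ Γ (.ret e) A
    | bind : STy Δ Γ s A → CTy (.val A :: Δ) Γ c B → CTy Δ Γ (.bind s c) B
    | letbox : ETy Δ e (.box Ψ A) → CTy (.modal A Ψ :: Δ) Γ c B →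
        CTy Δ Γ (.letbox e c) B
  /-- Statement typing `Δ; Γ ⊢ s ÷ₛ A`. -/
  inductive STy : DCtx → GCtx → Stmt → Ty → Prop where
    | op : Γ[i]? = some (.op A B) → ETy Δ e A → STy Δ Γ (.op i e) B
    | cont : Γ[k]? = some (.cont A S B) → ETy Δ e1 A → ETy Δ e2 S →
        STy Δ Γ (.cont k e1 e2) B
    | mvar : Δ[u]? = some (.modal A Ψ) → TTy Δ Ψ' Θ A Ψ B →
        HTy Δ Γ h B Ψ' S C → ETy Δ e S → STy Δ Γ (.handle u Θ h e) C
  /-- Handler typing `Δ; Γ ⊢ h ÷ A[Ψ] ⇒@S B`. -/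
  inductive HTy : DCtx → GCtx → Handler → Ty → Theory → Ty → Ty → Prop where
    | retc : CTy (.val S :: .val A :: Δ) Γ c B → HTy Δ Γ (.retc c) A [] S B
    | opc : HTy Δ Γ h C Ψ S C' →
        CTy (.val S :: .val A :: Δ) (.cont B S C' :: Γ) c C' →
        HTy Δ Γ (.opc h c) C ((A, B) :: Ψ) S C'
  /-- Handling-sequence typing `Δ; Ψ ⊢ Θ ÷ A[Ψ'] ⇒ B`. -/
  inductive TTy : DCtx → Theory → HSeq → Ty → Theory → Ty → Prop where
    | nil : Ψ' <+: Ψ → TTy Δ Ψ .nil A Ψ' A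
    | cons : TTy Δ Ψ' Θ A Ψ'' B → HTy Δ (thCtx Ψ) h B Ψ' S C → ETy Δ e S →
        CTy (.val C :: Δ) (thCtx Ψ) c D → TTy Δ Ψ (.cons Θ h e c) A Ψ'' D
end

/-- Expression values: λ-abstractions, boxes, and base values such as (). -/
inductive EVal : Expr → Prop where
  | unit : EVal .unit
  | lam : EVal (.lam A e)
  | box : EVal (.box Ψ c)

/-- Call-by-value small-step reduction on expressions (Figure 6). -/
inductive EStep : Expr → Expr → Prop where
  | app1 : EStep e1 e1' → EStep (.app e1 e2) (.app e1' e2)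
  | app2 : EVal v → EStep e2 e2' → EStep (.app v e2) (.app v e2')
  | beta : EVal v → EStep (.app (.lam A e) v) (esbE v 0 e)
  | letbox1 : EStep e1 e1' → EStep (.letbox e1 e2) (.letbox e1' e2)
  | letbox : EStep (.letbox (.box Ψ c) e2) (msubE c 0 e2)

/-- Call-by-value small-step reduction on computations (Figure 6). -/
inductive CStep : Comp → Comp → Prop where
  | ret : EStep e e' → CStep (.ret e) (.ret e')
  | letbox1 : EStep e e' → CStep (.letbox e c) (.letbox e' c)
  | letbox : CStep (.letbox (.box Ψ c1) c2) (msubC c1 0 c2)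
/-! ### Auxiliary lemmas -/

section Lookup
variable {α : Type*}

theorem lk_lt (D L : List α) {m : ℕ} (h : m < D.length) : (D ++ L)[m]? = D[m]? := by
  rw [List.getElem?_append, if_pos h]

theorem lk_shift (D L : List α) (n : ℕ) : (D ++ L)[n + D.length]? = L[n]? := by
  rw [List.getElem?_append_right (by omega)]
  simp

theorem lk_eq (D L : List α) (a : α) : (D ++ a :: L)[D.length]? = some a := by
  rw [List.getElem?_append_right (le_refl _)]
  simp

theorem lk_mid (D L : List α) (a : α) {m : ℕ} (hm : ¬ m < D.length) (hne : m ≠ D.length) :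
    (D ++ a :: L)[m]? = (D ++ L)[m - 1]? := by
  rw [List.getElem?_append_right (by omega), List.getElem?_append_right (by omega)]
  have h : m - D.length = (m - 1 - D.length) + 1 := by omega
  rw [h]
  simp

theorem lk_adj (D L : List α) (a : α) {m : ℕ} (hne : m ≠ D.length) {h : α}
    (hl : (D ++ a :: L)[m]? = some h) : (D ++ L)[adjG D.length m]? = some h := by
  by_cases hlt : m < D.length
  · rw [adjG, if_pos hlt, lk_lt D L hlt, ← lk_lt D (a :: L) hlt]; exact hl
  · rw [adjG, if_neg hlt, ← lk_mid D L a hlt hne]; exact hl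

end Lookup

/-- Good Δ-renaming. -/
def GoodR (ρ : ℕ → ℕ) (Δ Δ' : DCtx) : Prop :=
  ∀ n h, Δ[n]? = some h → Δ'[ρ n]? = some h

theorem GoodR.lift {ρ Δ Δ'} (hρ : GoodR ρ Δ Δ') (a : DHyp) :
    GoodR (liftR ρ) (a :: Δ) (a :: Δ') := by
  intro n h hl
  cases n with
  | zero => simp only [liftR]; simpa using hl
  | succ n => simp only [liftR]; simpa using hρ n h (by simpa using hl)

theorem GoodR.shift (D Δ : DCtx) : GoodR (· + D.length) Δ (D ++ Δ) := by
  intro n h hl; rw [lk_shift]; exact hl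

/-- Good Γ-renaming. -/
def GoodG (ρ : ℕ → ℕ) (Γ Γ' : GCtx) : Prop :=
  ∀ n h, Γ[n]? = some h → Γ'[ρ n]? = some h

theorem GoodG.lift {ρ Γ Γ'} (hρ : GoodG ρ Γ Γ') (a : GHyp) :
    GoodG (liftR ρ) (a :: Γ) (a :: Γ') := by
  intro n h hl
  cases n with
  | zero => simp only [liftR]; simpa using hl
  | succ n => simp only [liftR]; simpa using hρ n h (by simpa using hl)

theorem GoodG.shift (G Γ : GCtx) : GoodG (· + G.length) Γ (G ++ Γ) := by
  intro n h hl; rw [lk_shift]; exact hl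

mutual
theorem renD_E : ∀ (e : Expr) {Δ Δ' : DCtx} {ρ A}, GoodR ρ Δ Δ' → ETy Δ e A →
    ETy Δ' (renDE ρ e) A
  | .var m, _, _, _, _, hρ, ht => by
      cases ht with | var hl => exact .var (hρ _ _ hl)
  | .unit, _, _, _, _, hρ, ht => by cases ht; exact .unit
  | .lam A e, _, _, _, _, hρ, ht => by
      cases ht with | lam h => exact .lam (renD_E e (hρ.lift _) h)
  | .app e1 e2, _, _, _, _, hρ, ht => by
      cases ht with | app h1 h2 => exact .app (renD_E e1 hρ h1) (renD_E e2 hρ h2)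
  | .box Ψ c, _, _, _, _, hρ, ht => by
      cases ht with | box h => exact .box (renD_C c hρ h)
  | .letbox e1 e2, _, _, _, _, hρ, ht => by
      cases ht with | letbox h1 h2 =>
        exact .letbox (renD_E e1 hρ h1) (renD_E e2 (hρ.lift _) h2)

theorem renD_C : ∀ (c : Comp) {Δ Δ' : DCtx} {Γ ρ A}, GoodR ρ Δ Δ' → CTy Δ Γ c A →
    CTy Δ' Γ (renDC ρ c) A
  | .ret e, _, _, _, _, _, hρ, ht => by
      cases ht with | ret h => exact .ret (renD_E e hρ h)
  | .bind s c, _, _, _, _, _, hρ, ht => by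
      cases ht with | bind hs hc =>
        exact .bind (renD_S s hρ hs) (renD_C c (hρ.lift _) hc)
  | .letbox e c, _, _, _, _, _, hρ, ht => by
      cases ht with | letbox he hc =>
        exact .letbox (renD_E e hρ he) (renD_C c (hρ.lift _) hc)

theorem renD_S : ∀ (s : Stmt) {Δ Δ' : DCtx} {Γ ρ A}, GoodR ρ Δ Δ' → STy Δ Γ s A →
    STy Δ' Γ (renDS ρ s) A
  | .op i e, _, _, _, _, _, hρ, ht => by
      cases ht with | op hl he => exact .op hl (renD_E e hρ he)
  | .cont k e1 e2, _, _, _, _, _, hρ, ht => by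
      cases ht with | cont hl h1 h2 =>
        exact .cont hl (renD_E e1 hρ h1) (renD_E e2 hρ h2)
  | .handle u Θ h e, _, _, _, _, _, hρ, ht => by
      cases ht with | mvar hl hΘ hh he =>
        exact .mvar (hρ _ _ hl) (renD_T Θ hρ hΘ) (renD_H h hρ hh) (renD_E e hρ he)

theorem renD_H : ∀ (h : Handler) {Δ Δ' : DCtx} {Γ ρ A Ψ S B}, GoodR ρ Δ Δ' →
    HTy Δ Γ h A Ψ S B → HTy Δ' Γ (renDH ρ h) A Ψ S B
  | .retc c, _, _, _, _, _, _, _, _, hρ, ht => by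
      cases ht with | retc hc => exact .retc (renD_C c ((hρ.lift _).lift _) hc)
  | .opc h c, _, _, _, _, _, _, _, _, hρ, ht => by
      cases ht with | opc hh hc =>
        exact .opc (renD_H h hρ hh) (renD_C c ((hρ.lift _).lift _) hc)

theorem renD_T : ∀ (Θ : HSeq) {Δ Δ' : DCtx} {Ψ ρ A Ψ' B}, GoodR ρ Δ Δ' →
    TTy Δ Ψ Θ A Ψ' B → TTy Δ' Ψ (renDT ρ Θ) A Ψ' B
  | .nil, _, _, _, _, _, _, _, hρ, ht => by
      cases ht with | nil hp => exact .nil hp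
  | .cons Θ h e c, _, _, _, _, _, _, _, hρ, ht => by
      cases ht with | cons hΘ hh he hc =>
        exact .cons (renD_T Θ hρ hΘ) (renD_H h hρ hh) (renD_E e hρ he)
          (renD_C c (hρ.lift _) hc)
end

mutual
theorem renG_C : ∀ (c : Comp) {Δ : DCtx} {Γ Γ' ρ A}, GoodG ρ Γ Γ' → CTy Δ Γ c A →
    CTy Δ Γ' (renGC ρ c) A
  | .ret e, _, _, _, _, _, hρ, ht => by
      cases ht with | ret h => exact .ret h
  | .bind s c, _, _, _, _, _, hρ, ht => by
      cases ht with | bind hs hc =>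
        exact .bind (renG_S s hρ hs) (renG_C c hρ hc)
  | .letbox e c, _, _, _, _, _, hρ, ht => by
      cases ht with | letbox he hc => exact .letbox he (renG_C c hρ hc)

theorem renG_S : ∀ (s : Stmt) {Δ : DCtx} {Γ Γ' ρ A}, GoodG ρ Γ Γ' → STy Δ Γ s A →
    STy Δ Γ' (renGS ρ s) A
  | .op i e, _, _, _, _, _, hρ, ht => by
      cases ht with | op hl he => exact .op (hρ _ _ hl) he
  | .cont k e1 e2, _, _, _, _, _, hρ, ht => by
      cases ht with | cont hl h1 h2 => exact .cont (hρ _ _ hl) h1 h2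
  | .handle u Θ h e, _, _, _, _, _, hρ, ht => by
      cases ht with | mvar hl hΘ hh he =>
        exact .mvar hl hΘ (renG_H h hρ hh) he

theorem renG_H : ∀ (h : Handler) {Δ : DCtx} {Γ Γ' ρ A Ψ S B}, GoodG ρ Γ Γ' →
    HTy Δ Γ h A Ψ S B → HTy Δ Γ' (renGH ρ h) A Ψ S B
  | .retc c, _, _, _, _, _, _, _, _, hρ, ht => by
      cases ht with | retc hc => exact .retc (renG_C c hρ hc)
  | .opc h c, _, _, _, _, _, _, _, _, hρ, ht => by
      cases ht with | opc hh hc =>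
        exact .opc (renG_H h hρ hh) (renG_C c (hρ.lift _) hc)
end

theorem GoodR.wk1 (a : DHyp) (Δ : DCtx) : GoodR Nat.succ Δ (a :: Δ) :=
  fun _ _ hl => by simpa using hl

theorem lk_sIdx (D : DCtx) (L : DCtx) (a : DHyp) {m : ℕ} (hne : m ≠ D.length) {h : DHyp}
    (hl : (D ++ a :: L)[m]? = some h) : (D ++ L)[sIdx D.length m]? = some h := by
  by_cases hlt : m < D.length
  · rw [sIdx, if_pos hlt, lk_lt D L hlt, ← lk_lt D (a :: L) hlt]; exact hl
  · rw [sIdx, if_neg hlt, ← lk_mid D L a hlt hne]; exact hl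

mutual
theorem esb_E : ∀ (e' : Expr) {Δb : DCtx} {e A} (D : DCtx) {B}, ETy Δb e A →
    ETy (D ++ .val A :: Δb) e' B → ETy (D ++ Δb) (esbE e D.length e') B
  | .var m, Δb, e, A, D, B, he, ht => by
      cases ht with | var hl =>
      simp only [esbE, sVar]
      split
      · rename_i hlt
        rw [lk_lt _ _ hlt] at hl
        exact .var (by rw [lk_lt _ _ hlt]; exact hl)
      · split
        · rename_i hne heq
          subst heq
          rw [lk_eq] at hl
          injection hl with hl'
          injection hl' with hA
          subst hA
          exact renD_E e (GoodR.shift D Δb) he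
        · rename_i hlt hne
          exact .var (by rw [← lk_mid D Δb _ hlt hne]; exact hl)
  | .unit, _, _, _, _, _, _, ht => by cases ht; exact .unit
  | .lam A' e', _, _, _, D, _, he, ht => by
      cases ht with | lam h => exact .lam (esb_E e' (.val A' :: D) he h)
  | .app e1 e2, _, _, _, D, _, he, ht => by
      cases ht with | app h1 h2 => exact .app (esb_E e1 D he h1) (esb_E e2 D he h2)
  | .box Ψ c, _, _, _, D, _, he, ht => by
      cases ht with | box h => exact .box (esb_C c D he h)
  | .letbox e1 e2, _, _, _, D, _, he, ht => by
      cases ht with | letbox h1 h2 =>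
        exact .letbox (esb_E e1 D he h1) (esb_E e2 (.modal _ _ :: D) he h2)

theorem esb_C : ∀ (c : Comp) {Δb : DCtx} {Γ e A} (D : DCtx) {B}, ETy Δb e A →
    CTy (D ++ .val A :: Δb) Γ c B → CTy (D ++ Δb) Γ (esbC e D.length c) B
  | .ret e', _, _, _, _, D, _, he, ht => by
      cases ht with | ret h => exact .ret (esb_E e' D he h)
  | .bind s c, _, _, _, _, D, _, he, ht => by
      cases ht with | bind hs hc =>
        exact .bind (esb_S s D he hs) (esb_C c (.val _ :: D) he hc)
  | .letbox e' c, _, _, _, _, D, _, he, ht => by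
      cases ht with | letbox h1 hc =>
        exact .letbox (esb_E e' D he h1) (esb_C c (.modal _ _ :: D) he hc)

theorem esb_S : ∀ (s : Stmt) {Δb : DCtx} {Γ e A} (D : DCtx) {B}, ETy Δb e A →
    STy (D ++ .val A :: Δb) Γ s B → STy (D ++ Δb) Γ (esbS e D.length s) B
  | .op i e', _, _, _, _, D, _, he, ht => by
      cases ht with | op hl h => exact .op hl (esb_E e' D he h)
  | .cont k e1 e2, _, _, _, _, D, _, he, ht => by
      cases ht with | cont hl h1 h2 =>
        exact .cont hl (esb_E e1 D he h1) (esb_E e2 D he h2)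
  | .handle u Θ h e', _, _, _, _, D, _, he, ht => by
      cases ht with | mvar hl hΘ hh h1 =>
      have hne : u ≠ D.length := by
        intro hu; subst hu; rw [lk_eq] at hl; cases hl
      exact .mvar (lk_sIdx D _ _ hne hl) (esb_T Θ D he hΘ) (esb_H h D he hh)
        (esb_E e' D he h1)

theorem esb_H : ∀ (h : Handler) {Δb : DCtx} {Γ e A} (D : DCtx) {C Ψ S B}, ETy Δb e A →
    HTy (D ++ .val A :: Δb) Γ h C Ψ S B → HTy (D ++ Δb) Γ (esbH e D.length h) C Ψ S B
  | .retc c, _, _, _, _, D, _, _, _, _, he, ht => by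
      cases ht with | retc hc => exact .retc (esb_C c (.val _ :: .val _ :: D) he hc)
  | .opc h c, _, _, _, _, D, _, _, _, _, he, ht => by
      cases ht with | opc hh hc =>
        exact .opc (esb_H h D he hh) (esb_C c (.val _ :: .val _ :: D) he hc)

theorem esb_T : ∀ (Θ : HSeq) {Δb : DCtx} {Ψ e A} (D : DCtx) {C Ψ' B}, ETy Δb e A →
    TTy (D ++ .val A :: Δb) Ψ Θ C Ψ' B → TTy (D ++ Δb) Ψ (esbT e D.length Θ) C Ψ' B
  | .nil, _, _, _, _, _, _, _, _, he, ht => by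
      cases ht with | nil hp => exact .nil hp
  | .cons Θ h e' c, _, _, _, _, D, _, _, _, he, ht => by
      cases ht with | cons hΘ hh h1 hc =>
        exact .cons (esb_T Θ D he hΘ) (esb_H h D he hh) (esb_E e' D he h1)
          (esb_C c (.val _ :: D) he hc)
end

theorem monSub_ty : ∀ (c : Comp) {Δ : DCtx} {Γ A c' B}, CTy Δ Γ c A →
    CTy (.val A :: Δ) Γ c' B → CTy Δ Γ (monSub c c') B
  | .ret e, _, _, _, _, _, hc, hc' => by
      cases hc with | ret he => exact esb_C _ [] he hc'
  | .bind s c, _, _, _, _, _, hc, hc' => by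
      cases hc with | bind hs hcc =>
        exact .bind hs (monSub_ty c hcc
          (renD_C _ ((GoodR.wk1 _ _).lift _) hc'))
  | .letbox e c, _, _, _, _, _, hc, hc' => by
      cases hc with | letbox he hcc =>
        exact .letbox he (monSub_ty c hcc
          (renD_C _ ((GoodR.wk1 _ _).lift _) hc'))

mutual
theorem ksub_C : ∀ (c : Comp) {Δ : DCtx} {Γ : GCtx} {A1 A2 A3 : Ty} {body : Comp}
    (D : DCtx) (G : GCtx) {B : Ty},
    CTy (.val A2 :: .val A1 :: Δ) Γ body A3 →
    CTy (D ++ Δ) (G ++ .cont A1 A2 A3 :: Γ) c B →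
    CTy (D ++ Δ) (G ++ Γ) (ksubC body G.length D.length G.length c) B
  | .ret e, _, _, _, _, _, _, D, G, _, hb, ht => by
      cases ht with | ret he => exact .ret he
  | .bind (.cont k e1 e2) c', Δ, Γ, A1, A2, A3, body, D, G, B, hb, ht => by
      cases ht with | bind hs hc' =>
      cases hs with | cont hl h1 h2 =>
      simp only [ksubC]
      split
      · rename_i hk
        subst hk
        rw [lk_eq] at hl
        injection hl with hl'
        injection hl' with hA hS hB
        subst hA; subst hS; subst hB
        have hb1 : CTy (.val A2 :: .val A1 :: Δ) (G ++ Γ)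
            (renGC (· + G.length) body) A3 := renG_C _ (GoodG.shift G Γ) hb
        have hb2 : CTy (.val A2 :: .val A1 :: (D ++ Δ)) (G ++ Γ)
            (renDC (liftR (liftR (· + D.length))) (renGC (· + G.length) body)) A3 :=
          renD_C _ (((GoodR.shift D Δ).lift _).lift _) hb1
        have hb3 := esb_C _ [.val A2] h1 hb2
        have hb4 := esb_C _ [] h2 hb3
        exact monSub_ty _ hb4 (ksub_C c' (.val A3 :: D) G hb hc')
      · rename_i hk
        exact .bind (.cont (lk_adj G Γ _ hk hl) h1 h2)
          (ksub_C c' (.val _ :: D) G hb hc')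
  | .bind (.op i e) c', _, _, _, _, _, _, D, G, _, hb, ht => by
      cases ht with | bind hs hc' =>
      cases hs with | op hl he =>
      have hne : i ≠ G.length := by
        intro hi; subst hi; rw [lk_eq] at hl; cases hl
      exact .bind (.op (lk_adj G _ _ hne hl) he) (ksub_C c' (.val _ :: D) G hb hc')
  | .bind (.handle u Θ h e) c', _, _, _, _, _, _, D, G, _, hb, ht => by
      cases ht with | bind hs hc' =>
      cases hs with | mvar hl hΘ hh he =>
      exact .bind (.mvar hl hΘ (ksub_H h D G hb hh) he)
        (ksub_C c' (.val _ :: D) G hb hc')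
  | .letbox e c', _, _, _, _, _, _, D, G, _, hb, ht => by
      cases ht with | letbox he hc' =>
        exact .letbox he (ksub_C c' (.modal _ _ :: D) G hb hc')

theorem ksub_H : ∀ (h : Handler) {Δ : DCtx} {Γ : GCtx} {A1 A2 A3 : Ty} {body : Comp}
    (D : DCtx) (G : GCtx) {C : Ty} {Ψ : Theory} {S C' : Ty},
    CTy (.val A2 :: .val A1 :: Δ) Γ body A3 →
    HTy (D ++ Δ) (G ++ .cont A1 A2 A3 :: Γ) h C Ψ S C' →
    HTy (D ++ Δ) (G ++ Γ) (ksubH body G.length D.length G.length h) C Ψ S C'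
  | .retc c, _, _, _, _, _, _, D, G, _, _, _, _, hb, ht => by
      cases ht with | retc hc =>
        exact .retc (ksub_C c (.val _ :: .val _ :: D) G hb hc)
  | .opc h c, _, _, _, _, _, _, D, G, _, _, _, _, hb, ht => by
      cases ht with | opc hh hc =>
        exact .opc (ksub_H h D G hb hh)
          (ksub_C c (.val _ :: .val _ :: D) (.cont _ _ _ :: G) hb hc)
end

/-- Continuation substitution principle for handlers, Lemma 4(2):
if `Δ, x : A₁, y : A₂; Γ ⊢ c′ ÷ A₃` and `Δ; Γ, k ∼: A₁ @ A₂ ⇒ A₃ ⊢ h ÷ C[Ψ] ⇒@S C′`, then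
`Δ; Γ ⊢ ⟨⟨(x, y). c′ / k⟩⟩ h ÷ C[Ψ] ⇒@S C′`. -/
theorem ecmtt_cont_subst_handler :
    ∀ (Δ : DCtx) (Γ : GCtx) (c' : Comp) (h : Handler) (A1 A2 A3 : Ty)
      (C : Ty) (Ψ : Theory) (S C' : Ty),
      CTy (.val A2 :: .val A1 :: Δ) Γ c' A3 →
      HTy Δ (.cont A1 A2 A3 :: Γ) h C Ψ S C' →
      HTy Δ Γ (ksubH c' 0 0 0 h) C Ψ S C' := by
  intro Δ Γ c' h A1 A2 A3 C Ψ S C' hb hh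
  exact ksub_H h [] [] hb hh
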